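/- Fix d ≥ 1. For n ≥ 3 define c_n(k) for 0 ≤ k ≤ d−1 as the number of d-legal words on the alphabet {a,b,A,B} of weight n or n+1 whose first k letters avoid A and whose first d letters avoid B. Then c_n(0) = c_{n−2}(0) + c_{n−2}(d−1) + c_{n−3}(d−1), and c_n(k) = c_{n−2}(k−1) + c_{n−2}(d−1) for 1 ≤ k ≤ d−1. -/

import Mathlib

/-!
Split a counted word according to its first letter `ℓ`. Legality of `ℓ :: y` amounts to
legality of `y` together with, for each capital `P` with lower-case `p`: nothing if `ℓ = p`,
no `P` among the first `d - 1` letters of `y` if `ℓ = P`, and no `P` among the first `d`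
letters of `y` otherwise. A leading `B` is excluded since `d ≥ 1`, and a leading `A` exactly
when `k ≥ 1`. Removing a leading `a` leaves a word counted by `c_{n-2}(k-1)`, removing a
leading `A` one counted by `c_{n-3}(d-1)`, and removing a leading `b` and then exchanging
`a ↔ b`, `A ↔ B` one counted by `c_{n-2}(d-1)`.
-/

/-- The four-letter alphabet `Σ = {a, b, A, B}`. -/
inductive Letter | a | b | A | B
deriving DecidableEq

/-- Letter weights: `w(a)=w(b)=2`, `w(A)=w(B)=3`. -/
def Letter.wt : Letter → ℕ
  | .a => 2 | .b => 2 | .A => 3 | .B => 3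

/-- The weight of a word is the sum of the weights of its letters. -/
def wtWord (x : List Letter) : ℕ := (x.map Letter.wt).sum

/-- A word `x` (0-indexed) is `d`-legal if whenever `x_m = A` then `x_{m−i} = a` for
`1 ≤ i ≤ min(d−1, m)`, and if `m ≥ d` then `x_{m−d} ∈ {a, A}`; and symmetrically for
`B` with `b`. -/
def dLegal (d : ℕ) (x : List Letter) : Prop :=
  ∀ m : ℕ, ∀ hm : m < x.length,
    (x.get ⟨m, hm⟩ = .A →
      (∀ i, 1 ≤ i → i ≤ d - 1 → i ≤ m → x.get ⟨m - i, by omega⟩ = .a) ∧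
      (d ≤ m → x.get ⟨m - d, by omega⟩ = .a ∨ x.get ⟨m - d, by omega⟩ = .A)) ∧
    (x.get ⟨m, hm⟩ = .B →
      (∀ i, 1 ≤ i → i ≤ d - 1 → i ≤ m → x.get ⟨m - i, by omega⟩ = .b) ∧
      (d ≤ m → x.get ⟨m - d, by omega⟩ = .b ∨ x.get ⟨m - d, by omega⟩ = .B))

/-- `cn d n k` is the number of `d`-legal words of weight `n` or `n+1` whose first `k`
letters avoid `A` and whose first `d` letters avoid `B`. -/
noncomputable def cn (d n k : ℕ) : ℕ :=
  Set.ncard {x : List Letter | dLegal d x ∧ (wtWord x = n ∨ wtWord x = n + 1) ∧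
    (∀ m, ∀ hm : m < x.length, m < k → x.get ⟨m, hm⟩ ≠ .A) ∧
    (∀ m, ∀ hm : m < x.length, m < d → x.get ⟨m, hm⟩ ≠ .B)}

namespace List

variable {α : Type*}

lemma getElem?_cons_succ_sub (a : α) (l : List α) {m i : ℕ} (hi : i ≤ m + 1) :
    (a :: l)[m + 1 - i]? = if i ≤ m then l[m - i]? else some a := by
  split_ifs with h
  · rw [show m + 1 - i = m - i + 1 by omega, getElem?_cons_succ]
  · rw [show m + 1 - i = 0 by omega, getElem?_cons_zero]

lemma notMem_take_iff_getElem? {a : α} {l : List α} {k : ℕ} :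
    a ∉ l.take k ↔ ∀ m, l[m]? = some a → k ≤ m := by
  simp only [mem_take_iff_getElem, getElem?_eq_some_iff]
  constructor
  · rintro h m ⟨hm, rfl⟩
    by_contra hk
    exact h ⟨m, by omega, rfl⟩
  · rintro h ⟨m, hm, rfl⟩
    have := h m ⟨by omega, rfl⟩
    omega

lemma mem_take_cons_of_ne {a b : α} (h : a ≠ b) {l : List α} {k : ℕ} :
    a ∈ (b :: l).take k ↔ a ∈ l.take (k - 1) := by
  cases k <;> simp [h]

lemma forall_get_ne_iff_notMem_take {a : α} {l : List α} {k : ℕ} :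
    (∀ m, ∀ hm : m < l.length, m < k → l.get ⟨m, hm⟩ ≠ a) ↔ a ∉ l.take k := by
  simp only [mem_take_iff_getElem, get_eq_getElem, not_exists]
  exact ⟨fun h m hm => h m (by omega) (by omega), fun h m hm hk => h m (by omega)⟩

lemma ncard_eq_sum_ncard_cons [Fintype α] {S : Set (List α)} (hS : S.Finite) (hnil : [] ∉ S) :
    S.ncard = ∑ a, {l | a :: l ∈ S}.ncard := by
  have : ∀ a, Finite {l | a :: l ∈ S} := fun a => (hS.preimage cons_injective.injOn).to_subtype
  let e : (Σ a, {l | a :: l ∈ S}) ≃ S := Equiv.ofBijective (fun p => ⟨p.1 :: p.2.1, p.2.2⟩) <| by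
    constructor
    · rintro ⟨a, l, hl⟩ ⟨a', l', hl'⟩ h
      obtain ⟨rfl, rfl⟩ := cons_eq_cons.mp (congrArg Subtype.val h)
      rfl
    · rintro ⟨_ | ⟨a, l⟩, h⟩
      · exact absurd h hnil
      · exact ⟨⟨a, l, h⟩, rfl⟩
  rw [← Nat.card_coe_set_eq, ← Nat.card_congr e, Nat.card_sigma]
  simp only [Nat.card_coe_set_eq]

end List

namespace Letter

instance : Fintype Letter := ⟨{a, b, A, B}, fun ℓ => by cases ℓ <;> decide⟩

lemma sum_univ {M : Type*} [AddCommMonoid M] (f : Letter → M) :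
    ∑ ℓ, f ℓ = f a + f b + f A + f B := by
  simp [Finset.univ, Fintype.elems, add_assoc]

def swap : Letter → Letter
  | a => b | b => a | A => B | B => A

@[simp] lemma swap_swap (ℓ : Letter) : ℓ.swap.swap = ℓ := by cases ℓ <;> rfl

lemma swap_involutive : Function.Involutive swap := swap_swap

@[simp] lemma wt_swap (ℓ : Letter) : ℓ.swap.wt = ℓ.wt := by cases ℓ <;> rfl

lemma swap_eq_iff {ℓ ℓ' : Letter} : ℓ.swap = ℓ' ↔ ℓ = ℓ'.swap := by
  cases ℓ <;> cases ℓ' <;> decide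

end Letter

lemma notMem_take_map_swap {ℓ : Letter} {x : List Letter} {k : ℕ} :
    ℓ ∉ (x.map Letter.swap).take k ↔ ℓ.swap ∉ x.take k := by
  rw [← List.map_take, List.mem_map_of_involutive Letter.swap_involutive]

lemma wtWord_cons (ℓ : Letter) (y : List Letter) : wtWord (ℓ :: y) = ℓ.wt + wtWord y := by
  simp [wtWord]

lemma wtWord_map_swap (x : List Letter) : wtWord (x.map Letter.swap) = wtWord x := by
  simp [wtWord, Function.comp_def]

lemma length_le_wtWord (x : List Letter) : x.length ≤ wtWord x := by
  induction x with
  | nil => simp [wtWord]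
  | cons ℓ y ih => cases ℓ <;> simp [wtWord_cons, Letter.wt] <;> omega

/-- The half of `dLegal` about the capital `P`, stated with `x[m]?` so that indices can be
rewritten without carrying bound proofs. -/
def dLegalFor (d : ℕ) (p P : Letter) (x : List Letter) : Prop :=
  ∀ m, x[m]? = some P →
    (∀ i, 1 ≤ i → i ≤ d - 1 → i ≤ m → x[m - i]? = some p) ∧
    (d ≤ m → x[m - d]? = some p ∨ x[m - d]? = some P)

section dLegal

variable {d : ℕ} {p P ℓ : Letter} {x y : List Letter}

lemma dLegal_iff : dLegal d x ↔ dLegalFor d .a .A x ∧ dLegalFor d .b .B x := by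
  simp only [dLegal, dLegalFor, List.get_eq_getElem, List.getElem?_eq_some_iff]
  constructor
  · intro H
    constructor <;> rintro m ⟨hm, hP⟩
    · obtain ⟨hi, hd⟩ := (H m hm).1 hP
      exact ⟨fun i h1 h2 h3 => ⟨by omega, hi i h1 h2 h3⟩,
        fun h => (hd h).imp (⟨by omega, ·⟩) (⟨by omega, ·⟩)⟩
    · obtain ⟨hi, hd⟩ := (H m hm).2 hP
      exact ⟨fun i h1 h2 h3 => ⟨by omega, hi i h1 h2 h3⟩,
        fun h => (hd h).imp (⟨by omega, ·⟩) (⟨by omega, ·⟩)⟩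
  · rintro ⟨HA, HB⟩ m hm
    constructor <;> intro hP
    · obtain ⟨hi, hd⟩ := HA m ⟨hm, hP⟩
      exact ⟨fun i h1 h2 h3 => (hi i h1 h2 h3).2, fun h => (hd h).imp Exists.snd Exists.snd⟩
    · obtain ⟨hi, hd⟩ := HB m ⟨hm, hP⟩
      exact ⟨fun i h1 h2 h3 => (hi i h1 h2 h3).2, fun h => (hd h).imp Exists.snd Exists.snd⟩

lemma dLegalFor_cons :
    dLegalFor d p P (ℓ :: y) ↔ dLegalFor d p P y ∧
      ∀ m, y[m]? = some P → (m + 1 < d → ℓ = p) ∧ (m + 1 = d → ℓ = p ∨ ℓ = P) := by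
  constructor
  · intro H
    refine ⟨fun m hm => ?_, fun m hm => ?_⟩ <;>
      obtain ⟨hi, hd⟩ := H (m + 1) (by rwa [List.getElem?_cons_succ])
    · refine ⟨fun i h1 h2 h3 => ?_, fun h => ?_⟩
      · simpa [List.getElem?_cons_succ_sub _ _ (Nat.le_succ_of_le h3), h3] using
          hi i h1 h2 (by omega)
      · simpa [List.getElem?_cons_succ_sub _ _ (Nat.le_succ_of_le h), h] using hd (by omega)
    · refine ⟨fun h => ?_, fun h => ?_⟩
      · simpa [List.getElem?_cons_succ_sub] using hi (m + 1) (by omega) (by omega) le_rfl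
      · simpa [List.getElem?_cons_succ_sub, h] using hd (by omega)
  · rintro ⟨H, Hℓ⟩ (_ | m) hm
    · exact ⟨fun i h1 _ h3 => by omega, fun _ => Or.inr (by rwa [Nat.zero_sub])⟩
    · rw [List.getElem?_cons_succ] at hm
      obtain ⟨hi, hd⟩ := H m hm
      obtain ⟨hℓi, hℓd⟩ := Hℓ m hm
      refine ⟨fun i h1 h2 h3 => ?_, fun h => ?_⟩
      · rw [List.getElem?_cons_succ_sub _ _ h3]
        split_ifs with h
        · exact hi i h1 h2 h
        · rw [hℓi (by omega)]
      · rw [List.getElem?_cons_succ_sub _ _ h]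
        split_ifs with h'
        · exact hd h'
        · simpa using hℓd (by omega)

lemma dLegalFor_cons_small : dLegalFor d p P (p :: y) ↔ dLegalFor d p P y := by
  simp [dLegalFor_cons]

lemma dLegalFor_cons_capital (hpP : p ≠ P) :
    dLegalFor d p P (P :: y) ↔ dLegalFor d p P y ∧ P ∉ y.take (d - 1) := by
  rw [dLegalFor_cons, List.notMem_take_iff_getElem?]
  refine and_congr_right fun _ => forall_congr' fun m => imp_congr_right fun _ => ?_
  simp only [hpP.symm, or_true, imp_true_iff, and_true, imp_false]
  omega

lemma dLegalFor_cons_of_ne (hp : ℓ ≠ p) (hP : ℓ ≠ P) :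
    dLegalFor d p P (ℓ :: y) ↔ dLegalFor d p P y ∧ P ∉ y.take d := by
  rw [dLegalFor_cons, List.notMem_take_iff_getElem?]
  refine and_congr_right fun _ => forall_congr' fun m => imp_congr_right fun _ => ?_
  simp only [hp, hP, or_self, imp_false]
  omega

lemma dLegal_cons_a : dLegal d (.a :: y) ↔ dLegal d y ∧ .B ∉ y.take d := by
  rw [dLegal_iff, dLegal_iff, dLegalFor_cons_small, dLegalFor_cons_of_ne (by decide) (by decide),
    and_assoc]

lemma dLegal_cons_b : dLegal d (.b :: y) ↔ dLegal d y ∧ .A ∉ y.take d := by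
  rw [dLegal_iff, dLegal_iff, dLegalFor_cons_small, dLegalFor_cons_of_ne (by decide) (by decide)]
  tauto

lemma dLegal_cons_A :
    dLegal d (.A :: y) ↔ dLegal d y ∧ .A ∉ y.take (d - 1) ∧ .B ∉ y.take d := by
  rw [dLegal_iff, dLegal_iff, dLegalFor_cons_capital (by decide),
    dLegalFor_cons_of_ne (by decide) (by decide)]
  tauto

lemma dLegalFor_map_swap : dLegalFor d p P (x.map Letter.swap) ↔ dLegalFor d p.swap P.swap x := by
  simp only [dLegalFor, List.getElem?_map, Option.map_eq_some_iff, Letter.swap_eq_iff,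
    exists_eq_right]

lemma dLegal_map_swap : dLegal d (x.map Letter.swap) ↔ dLegal d x := by
  rw [dLegal_iff, dLegal_iff, dLegalFor_map_swap, dLegalFor_map_swap, and_comm]
  rfl

end dLegal

def countedWords (d n k : ℕ) : Set (List Letter) :=
  {x | dLegal d x ∧ (wtWord x = n ∨ wtWord x = n + 1) ∧ .A ∉ x.take k ∧ .B ∉ x.take d}

lemma cn_eq_ncard (d n k : ℕ) : cn d n k = (countedWords d n k).ncard := by
  simp only [cn, countedWords, List.forall_get_ne_iff_notMem_take]

section countedWords

variable {d n k : ℕ}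

lemma countedWords_finite : (countedWords d n k).Finite :=
  (List.finite_length_le Letter (n + 1)).subset fun x ⟨_, hwt, _⟩ => by
    have := length_le_wtWord x
    simp only [Set.mem_ofPred_eq]
    omega

lemma nil_notMem_countedWords (hn : 1 ≤ n) : [] ∉ countedWords d n k := by
  rintro ⟨-, hwt, -⟩
  simp [wtWord] at hwt
  omega

lemma setOf_cons_a_mem_countedWords (hn : 2 ≤ n) :
    {y | .a :: y ∈ countedWords d n k} = countedWords d (n - 2) (k - 1) := by
  ext y
  have hsub := List.take_subset_take_left y (Nat.sub_le d 1)
  simp only [countedWords, Set.mem_ofPred_eq, dLegal_cons_a, wtWord_cons, Letter.wt,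
    List.mem_take_cons_of_ne (show Letter.A ≠ .a by decide),
    List.mem_take_cons_of_ne (show Letter.B ≠ .a by decide)]
  constructor
  · rintro ⟨⟨hleg, hB⟩, hwt, hA, -⟩
    exact ⟨hleg, by omega, hA, hB⟩
  · rintro ⟨hleg, hwt, hA, hB⟩
    exact ⟨⟨hleg, hB⟩, by omega, hA, fun h => hB (hsub h)⟩

lemma setOf_cons_b_mem_countedWords (hn : 2 ≤ n) (hk : k ≤ d) :
    {y | .b :: y ∈ countedWords d n k} =
      List.map Letter.swap ⁻¹' countedWords d (n - 2) (d - 1) := by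
  ext y
  have hsub := List.take_subset_take_left y (show k - 1 ≤ d by omega)
  simp only [countedWords, Set.mem_ofPred_eq, Set.mem_preimage, dLegal_cons_b, dLegal_map_swap,
    wtWord_cons, wtWord_map_swap, Letter.wt, notMem_take_map_swap,
    List.mem_take_cons_of_ne (show Letter.A ≠ .b by decide),
    List.mem_take_cons_of_ne (show Letter.B ≠ .b by decide)]
  constructor
  · rintro ⟨⟨hleg, hA⟩, hwt, -, hB⟩
    exact ⟨hleg, by omega, hB, hA⟩
  · rintro ⟨hleg, hwt, hB, hA⟩
    exact ⟨⟨hleg, hA⟩, by omega, fun h => hA (hsub h), hB⟩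

lemma setOf_cons_A_mem_countedWords_zero (hn : 3 ≤ n) :
    {y | .A :: y ∈ countedWords d n 0} = countedWords d (n - 3) (d - 1) := by
  ext y
  have hsub := List.take_subset_take_left y (Nat.sub_le d 1)
  simp only [countedWords, Set.mem_ofPred_eq, dLegal_cons_A, wtWord_cons, Letter.wt,
    List.take_zero, List.not_mem_nil, not_false_eq_true,
    List.mem_take_cons_of_ne (show Letter.B ≠ .A by decide)]
  constructor
  · rintro ⟨⟨hleg, hA, hB⟩, hwt, -, -⟩
    exact ⟨hleg, by omega, hA, hB⟩
  · rintro ⟨hleg, hwt, hA, hB⟩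
    exact ⟨⟨hleg, hA, hB⟩, by omega, trivial, fun h => hB (hsub h)⟩

lemma setOf_cons_A_mem_countedWords_of_pos (hk : 0 < k) :
    {y | .A :: y ∈ countedWords d n k} = ∅ :=
  Set.eq_empty_of_forall_notMem fun _ ⟨_, _, hA, _⟩ => hA (by simp [List.take_cons hk])

lemma setOf_cons_B_mem_countedWords (hd : 1 ≤ d) :
    {y | .B :: y ∈ countedWords d n k} = ∅ :=
  Set.eq_empty_of_forall_notMem fun _ ⟨_, _, _, hB⟩ => hB (by simp [List.take_cons hd])

lemma cn_eq_add_ncard_setOf_cons_A (hd : 1 ≤ d) (hn : 3 ≤ n) (hk : k ≤ d) :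
    cn d n k = cn d (n - 2) (k - 1) + cn d (n - 2) (d - 1) +
      {y | .A :: y ∈ countedWords d n k}.ncard := by
  have hswap := Letter.swap_involutive.list_map
  rw [cn_eq_ncard, List.ncard_eq_sum_ncard_cons countedWords_finite
      (nil_notMem_countedWords (by omega)), Letter.sum_univ,
    setOf_cons_a_mem_countedWords (by omega), setOf_cons_b_mem_countedWords (by omega) hk,
    setOf_cons_B_mem_countedWords hd, Set.ncard_empty, add_zero,
    Set.ncard_preimage_of_injective_subset_range hswap.injective
      (hswap.surjective.range_eq ▸ Set.subset_univ _), cn_eq_ncard, cn_eq_ncard]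

end countedWords

/-- Fix `d ≥ 1`. For `n ≥ 3`,
`c_n(0) = c_{n−2}(0) + c_{n−2}(d−1) + c_{n−3}(d−1)` and
`c_n(k) = c_{n−2}(k−1) + c_{n−2}(d−1)` for `1 ≤ k ≤ d−1`. -/
theorem stmt13 (d : ℕ) (hd : 1 ≤ d) (n : ℕ) (hn : 3 ≤ n) :
    cn d n 0 = cn d (n - 2) 0 + cn d (n - 2) (d - 1) + cn d (n - 3) (d - 1) ∧
    ∀ k, 1 ≤ k → k ≤ d - 1 → cn d n k = cn d (n - 2) (k - 1) + cn d (n - 2) (d - 1) := by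
  refine ⟨?_, fun k hk hkd => ?_⟩
  · rw [cn_eq_add_ncard_setOf_cons_A hd hn (Nat.zero_le d),
      setOf_cons_A_mem_countedWords_zero hn, ← cn_eq_ncard]
  · rw [cn_eq_add_ncard_setOf_cons_A hd hn (by omega),
      setOf_cons_A_mem_countedWords_of_pos hk, Set.ncard_empty, add_zero]
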